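/- Consider the primal-dual setting. Let (γ_k) and (σ_k) be sequences of strictly positive reals, and starting from (x^{-1}, x⁰, y⁰) let (x^k, y^k) be generated by the primal-dual updates. Then for every k ≥ 1, every primal-dual solution (x*, y*), every ε_{k+1}, τ_{k+1}, μ_{k+1} > 0 and every η_{k+1} ≥ ‖Aᵀ(y^{k+1} − y^k)‖ / ‖y^{k+1} − y^k‖ (convention 0/0 = 0), writing ρ_{k+1} = γ_{k+1}/γ_k, α_k = γ_kℓ_k, β_k = γ_kc_k: 0 ≤ ½‖x^k − x*‖² − ½‖x^{k+1} − x*‖² + ((ε_{k+1}ρ_{k+1} + μ_{k+1}η_{k+1}γ_{k+1} − 1)/2)‖x^k − x^{k+1}‖² + ρ_{k+1}( (1 − α_k(2 − β_k))/(2ε_{k+1}) + τ_{k+1}η_{k+1}γ_{k+1}/2 − ρ_{k+1}(1 − α_k) )‖x^{k-1} − x^k‖² + (γ_{k+1}/(2σ_{k+1}))‖y^k − y*‖² − ( γ_{k+1}/(2σ_{k+1}) − (η_{k+1}γ_{k+1}/2)(1/μ_{k+1} + ρ_{k+1}/τ_{k+1}) )‖y^{k+1} − y^k‖² − (γ_{k+1}/(2σ_{k+1}))‖y^{k+1}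 − y*‖² + γ_{k+1}ρ_{k+1}P_{k-1} − γ_{k+1}(1 + ρ_{k+1})P_k − γ_{k+1}Q_{k+1}. -/

import Mathlib

open scoped RealInnerProductSpace
open Filter

noncomputable section

/-- Euclidean space `ℝⁿ`. -/
abbrev En (n : ℕ) := EuclideanSpace ℝ (Fin n)

/-- Local Lipschitz-type estimate `ℓ = ⟨∇f(a) − ∇f(b), a − b⟩ / ‖a − b‖²`
(Lean's division by zero implements the `0/0 = 0` convention). -/
noncomputable def lEst {n : ℕ} (f' : En n → En n) (a b : En n) : ℝ :=
  ⟪f' a - f' b, a - b⟫ / ‖a - b‖ ^ 2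

/-- Local (inverse) cocoercivity estimate `c = ‖∇f(a) − ∇f(b)‖² / ⟨∇f(a) − ∇f(b), a − b⟩`
(convention `0/0 = 0`). -/
noncomputable def cEst {n : ℕ} (f' : En n → En n) (a b : En n) : ℝ :=
  ‖f' a - f' b‖ ^ 2 / ⟪f' a - f' b, a - b⟫

/-- `δ = γ ℓ (γ c − 1)`. -/
noncomputable def deltaEst {n : ℕ} (γ : ℝ) (f' : En n → En n) (a b : En n) : ℝ :=
  γ * lEst f' a b * (γ * cEst f' a b - 1)

/-- `g` is proper, lower semicontinuous and convex (extended-real-valued). -/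
def ProperLscConvex {n : ℕ} (g : En n → EReal) : Prop :=
  (∀ x, g x ≠ ⊥) ∧ (∃ x, g x ≠ ⊤) ∧ LowerSemicontinuous g ∧
    ∀ x y : En n, ∀ a b : ℝ, 0 ≤ a → 0 ≤ b → a + b = 1 →
      g (a • x + b • y) ≤ (a : EReal) * g x + (b : EReal) * g y

/-- `p = prox_{γ g}(u)`, characterized as minimality of `w ↦ g w + ‖w − u‖²/(2γ)`. -/
def IsProx {n : ℕ} (γ : ℝ) (g : En n → EReal) (u p : En n) : Prop :=
  ∀ w, g p + ((‖p - u‖ ^ 2 / (2 * γ) : ℝ) : EReal) ≤ g w + ((‖w - u‖ ^ 2 / (2 * γ) : ℝ) : EReal)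

/-- Real value of `φ = f + g` (equals `f z + g z` whenever `g z` is finite). -/
noncomputable def phiR {n : ℕ} (f : En n → ℝ) (g : En n → EReal) (z : En n) : ℝ :=
  f z + (g z).toReal

/-- `P = φ(z) − φ(x*)` (real-valued). -/
noncomputable def Pval {n : ℕ} (f : En n → ℝ) (g : En n → EReal) (xs z : En n) : ℝ :=
  phiR f g z - phiR f g xs

/-- adaPGM stepsize factor: `min{√(1+ρ), 1/(2√([δ]₊))}` with the convention `1/0 = +∞`
(so the second term is inactive when `[δ]₊ = 0`). -/
noncomputable def adaStep (ρ δ : ℝ) : ℝ :=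
  if δ ≤ 0 then Real.sqrt (1 + ρ) else min (Real.sqrt (1 + ρ)) (1 / (2 * Real.sqrt δ))

/-- Malitsky–Mishchenko stepsize: `min{γ√(1+γ/γ'), 1/(2L)}` with the convention `1/0 = +∞`. -/
noncomputable def mmStep (γprev γ L : ℝ) : ℝ :=
  if L = 0 then γ * Real.sqrt (1 + γ / γprev)
  else min (γ * Real.sqrt (1 + γ / γprev)) (1 / (2 * L))

/-- Lyapunov function `U_k = ½‖x^k − x*‖² + ¼‖x^k − x^{k-1}‖² + γ_k(1+ρ_k)P_{k-1}`,
with the Lean index shifted by one (Lean `x (k+1)` is the paper `x^k`). -/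
noncomputable def Ufun {n : ℕ} (f : En n → ℝ) (g : En n → EReal) (xs : En n)
    (x : ℕ → En n) (γ : ℕ → ℝ) (k : ℕ) : ℝ :=
  1/2 * ‖x (k+1) - xs‖ ^ 2 + 1/4 * ‖x (k+1) - x k‖ ^ 2
    + γ (k+1) * (1 + γ (k+1) / γ k) * Pval f g xs (x k)

/-- `v` is a subgradient of the extended-real-valued convex function `ψ` at `x`. -/
def ESubgrad {n : ℕ} (ψ : En n → EReal) (v x : En n) : Prop :=
  ∀ w, ψ x + ((⟪v, w - x⟫ : ℝ) : EReal) ≤ ψ w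

/-- `(xs, ys)` is a primal-dual solution:
`0 ∈ −A xs + ∂h⋆(ys)` and `0 ∈ Aᵀ ys + ∇f(xs) + ∂g(xs)`. -/
def IsPDSol {n m : ℕ} (f' : En n → En n) (g : En n → EReal) (hs : En m → EReal)
    (A : En n →L[ℝ] En m) (xs : En n) (ys : En m) : Prop :=
  ESubgrad hs (A xs) ys ∧
  ESubgrad g (-(ContinuousLinearMap.adjoint A ys) - f' xs) xs

/-- `P(z) = (f+g)(z) − (f+g)(x*) + ⟨z − x*, Aᵀ y*⟩` (extended-real-valued version). -/
noncomputable def Pw {n m : ℕ} (f : En n → ℝ) (g : En n → EReal)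
    (A : En n →L[ℝ] En m) (xs : En n) (ys : En m) (z : En n) : EReal :=
  (((f z : EReal) + g z) - ((f xs : EReal) + g xs))
    + ((⟪z - xs, ContinuousLinearMap.adjoint A ys⟫ : ℝ) : EReal)

/-- `Q(u) = h⋆(u) − h⋆(y*) + ⟨A x*, y* − u⟩` (extended-real-valued version). -/
noncomputable def Qw {n m : ℕ} (hs : En m → EReal)
    (A : En n →L[ℝ] En m) (xs : En n) (ys : En m) (u : En m) : EReal :=
  (hs u - hs ys) + ((⟪A xs, ys - u⟫ : ℝ) : EReal)

/-- Real-valued version of `P` (equal to `Pw` whenever the latter is finite). -/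
noncomputable def PpdR {n m : ℕ} (f : En n → ℝ) (g : En n → EReal)
    (A : En n →L[ℝ] En m) (xs : En n) (ys : En m) (z : En n) : ℝ :=
  (f z + (g z).toReal) - (f xs + (g xs).toReal)
    + ⟪z - xs, ContinuousLinearMap.adjoint A ys⟫

/-- Real-valued version of `Q` (equal to `Qw` whenever the latter is finite). -/
noncomputable def QpdR {n m : ℕ} (hs : En m → EReal)
    (A : En n →L[ℝ] En m) (xs : En n) (ys : En m) (u : En m) : ℝ :=
  (hs u).toReal - (hs ys).toReal + ⟪A xs, ys - u⟫

/-- The adaPDM stepsize: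
`min{ γ√(1+γ/γ'), 1/(2νtη₊), γ√((1−4ξ(1+ε)²)/(2(1+ε)(√(δ²+(tη₊γ)²(1−4ξ(1+ε)²))+δ))) }`,
with the convention `r/0 = +∞` in the last two terms (a term equal to `+∞` is
inactive in the min, which is implemented by replacing it with the first term). -/
noncomputable def pdStep (t ε ν γprev γcur δ ξ ηnext : ℝ) : ℝ :=
  let T1 := γcur * Real.sqrt (1 + γcur / γprev)
  let T2 := if ηnext = 0 then T1 else 1 / (2 * ν * t * ηnext)
  let D := 2 * (1 + ε) *
    (Real.sqrt (δ ^ 2 + (t * ηnext * γcur) ^ 2 * (1 - 4 * ξ * (1 + ε) ^ 2)) + δ)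
  let T3 := if D ≤ 0 then T1 else γcur * Real.sqrt ((1 - 4 * ξ * (1 + ε) ^ 2) / D)
  min T1 (min T2 T3)

/-- Primal-dual Lyapunov function
`U_k = ½‖x^k−x*‖² + ((1−4ξ_k(1+ε))/4)‖x^k−x^{k-1}‖² + (1/(2t²))‖y^k−y*‖² + γ_k(1+ρ_k)P_{k-1}`,
with the Lean index shifted by one (Lean `x (k+1)`, `y (k+1)`, `γ (k+1)`, `η (k+1)` are
the paper `x^k`, `y^k`, `γ_k`, `η_k`). -/
noncomputable def Upd {n m : ℕ} (t ε : ℝ) (f : En n → ℝ) (g : En n → EReal)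
    (A : En n →L[ℝ] En m) (xs : En n) (ys : En m)
    (x : ℕ → En n) (y : ℕ → En m) (γ η : ℕ → ℝ) (k : ℕ) : ℝ :=
  1/2 * ‖x (k+1) - xs‖ ^ 2
    + (1 - 4 * (t^2 * (η (k+1))^2 * (γ (k+1))^2) * (1+ε)) / 4 * ‖x (k+1) - x k‖ ^ 2
    + 1/(2*t^2) * ‖y (k+1) - ys‖ ^ 2
    + γ (k+1) * (1 + γ (k+1) / γ k) * PpdR f g A xs ys (x k)

/-!
The inequality is a nonnegative combination of elementary inequalities: the prox inequalities
of the `x`-updates producing `x^k` (tested at `x^{k+1}` and `x^{k-1}`) and `x^{k+1}` (tested at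
`x*`) and of the `y`-update producing `y^{k+1}` (tested at `y*`), the gradient inequality of `f`
at `x^k` (tested at `x*` and `x^{k-1}`), and three Young inequalities. Two of them bound the
coupling terms `⟨y^{k+1} - y^k, A(x^k - x^{k±1})⟩` through `η`; the third bounds
`⟨x^k - x^{k+1}, (x^{k-1} - x^k) - γ_k (∇f(x^{k-1}) - ∇f(x^k))⟩`, and the second factor has
squared norm `(1 - α_k (2 - β_k)) ‖x^{k-1} - x^k‖²`. If `g(x^{k-1}) = ∞` then `P_{k-1} = ∞`
and there is nothing to prove.
-/

open scoped InnerProduct Topology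

theorem young_mul_le {κ : ℝ} (hκ : 0 < κ) (a b : ℝ) :
    a * b ≤ κ / 2 * a ^ 2 + b ^ 2 / (2 * κ) := by
  have hsq : 0 ≤ (κ * a - b) ^ 2 / (2 * κ) := by positivity
  have hid : κ / 2 * a ^ 2 + b ^ 2 / (2 * κ) - a * b = (κ * a - b) ^ 2 / (2 * κ) := by
    field_simp
    ring
  linarith

theorem le_of_forall_pos_le_add_mul {a b c : ℝ} (h : ∀ t : ℝ, 0 < t → t ≤ 1 → a ≤ b + t * c) :
    a ≤ b := by
  have hlim : Tendsto (fun t : ℝ => b + t * c) (𝓝[>] 0) (𝓝 b) :=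
    ((by fun_prop : Continuous fun t : ℝ => b + t * c).tendsto' 0 b (by simp)).mono_left
      nhdsWithin_le_nhds
  refine ge_of_tendsto hlim ?_
  filter_upwards [Ioc_mem_nhdsGT one_pos] with t ht using h t ht.1 ht.2

theorem ContinuousLinearMap.norm_apply_le_of_norm_div_le {E F : Type*} [NormedAddCommGroup E]
    [NormedSpace ℝ E] [NormedAddCommGroup F] [NormedSpace ℝ F] (L : E →L[ℝ] F) {v : E} {η : ℝ}
    (h : ‖L v‖ / ‖v‖ ≤ η) : ‖L v‖ ≤ η * ‖v‖ := by
  rcases eq_or_ne v 0 with rfl | hv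
  · simp
  · rwa [div_le_iff₀ (norm_pos_iff.2 hv)] at h

section InnerProductSpace

variable {E F : Type*} [NormedAddCommGroup E] [InnerProductSpace ℝ E]
  [NormedAddCommGroup F] [InnerProductSpace ℝ F]

theorem real_inner_le_young {κ : ℝ} (hκ : 0 < κ) (u v : E) :
    ⟪u, v⟫ ≤ κ / 2 * ‖u‖ ^ 2 + ‖v‖ ^ 2 / (2 * κ) :=
  (real_inner_le_norm u v).trans (young_mul_le hκ _ _)

theorem inner_apply_le_of_norm_adjoint_le [CompleteSpace E] [CompleteSpace F] {A : E →L[ℝ] F}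
    {v : F} {η μ : ℝ} (hη : 0 ≤ η) (hAv : ‖(A†) v‖ ≤ η * ‖v‖) (hμ : 0 < μ) (u : E) :
    ⟪v, A u⟫ ≤ η * (μ / 2 * ‖u‖ ^ 2 + ‖v‖ ^ 2 / (2 * μ)) := by
  rw [← ContinuousLinearMap.adjoint_inner_left]
  calc ⟪(A†) v, u⟫ ≤ ‖(A†) v‖ * ‖u‖ := real_inner_le_norm _ _
    _ ≤ η * (‖u‖ * ‖v‖) := by nlinarith [norm_nonneg u]
    _ ≤ η * (μ / 2 * ‖u‖ ^ 2 + ‖v‖ ^ 2 / (2 * μ)) := by gcongr; exact young_mul_le hμ _ _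

variable [CompleteSpace E] {f : E → ℝ}

theorem ConvexOn.add_inner_le_of_hasGradientAt (hconv : ConvexOn ℝ Set.univ f) {v a : E}
    (ha : HasGradientAt f v a) (b : E) : f a + ⟪v, b - a⟫ ≤ f b := by
  have hline : ConvexOn ℝ Set.univ (f ∘ AffineMap.lineMap (k := ℝ) a b) := by
    simpa using hconv.comp_affineMap (AffineMap.lineMap (k := ℝ) a b)
  have hderiv : HasDerivAt (f ∘ AffineMap.lineMap (k := ℝ) a b) ⟪v, b - a⟫ 0 := by
    simpa using ha.hasFDerivAt.comp_hasDerivAt_of_eq (0 : ℝ) AffineMap.hasDerivAt_lineMap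
      (AffineMap.lineMap_apply_zero a b).symm
  have := hline.le_slope_of_hasDerivAt (Set.mem_univ 0) (Set.mem_univ 1) one_pos hderiv
  simp only [slope_def_field, Function.comp_apply, AffineMap.lineMap_apply_one,
    AffineMap.lineMap_apply_zero, sub_zero, div_one] at this
  linarith

theorem HasGradientAt.eq_of_forall_add_inner_le {v w a : E} (ha : HasGradientAt f v a)
    (hw : ∀ b, f a + ⟪w, b - a⟫ ≤ f b) : v = w := by
  have hmin : IsLocalMin (fun b => f b - ⟪w, b⟫) a :=
    Filter.Eventually.of_forall fun b => by
      have := hw b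
      rw [inner_sub_right] at this
      dsimp only
      linarith
  have hzero := hmin.hasFDerivAt_eq_zero (ha.hasFDerivAt.sub (innerSL ℝ w).hasFDerivAt)
  simpa only [sub_apply, InnerProductSpace.toDual_apply_apply, innerSL_apply_apply, zero_apply,
    ← inner_sub_left, inner_self_eq_zero, sub_eq_zero] using congrArg (fun L => L (v - w)) hzero

theorem ConvexOn.gradient_eq_of_inner_sub_eq_zero (hconv : ConvexOn ℝ Set.univ f) {f' : E → E}
    (hgrad : ∀ z, HasGradientAt f (f' z) z) {a b : E} (h0 : ⟪f' a - f' b, a - b⟫ = 0) :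
    f' a = f' b :=
  (hgrad a).eq_of_forall_add_inner_le fun w => by
    have hb := hconv.add_inner_le_of_hasGradientAt (hgrad b) w
    have ha := hconv.add_inner_le_of_hasGradientAt (hgrad a) b
    simp only [inner_sub_left, inner_sub_right] at h0 hb ha ⊢
    linarith

end InnerProductSpace

section Euclidean

variable {n : ℕ}

theorem lEst_mul_norm_sq (f' : En n → En n) (a b : En n) :
    lEst f' a b * ‖a - b‖ ^ 2 = ⟪f' a - f' b, a - b⟫ := by
  rcases eq_or_ne a b with rfl | hab
  · simp
  · exact div_mul_cancel₀ _ (pow_ne_zero _ (norm_ne_zero_iff.2 (sub_ne_zero.2 hab)))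

variable {f : En n → ℝ} {f' : En n → En n}

theorem norm_sub_sq_eq_lEst_mul_cEst (hconv : ConvexOn ℝ Set.univ f)
    (hgrad : ∀ z, HasGradientAt f (f' z) z) (a b : En n) :
    ‖f' a - f' b‖ ^ 2 = lEst f' a b * cEst f' a b * ‖a - b‖ ^ 2 := by
  by_cases hI : ⟪f' a - f' b, a - b⟫ = 0
  · simp [lEst, hconv.gradient_eq_of_inner_sub_eq_zero hgrad hI]
  · rw [mul_right_comm, lEst_mul_norm_sq, cEst, mul_div_cancel₀ _ hI]

theorem norm_sub_smul_sub_sq (hconv : ConvexOn ℝ Set.univ f)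
    (hgrad : ∀ z, HasGradientAt f (f' z) z) (γ : ℝ) (a b : En n) :
    ‖(a - b) - γ • (f' a - f' b)‖ ^ 2
      = (1 - γ * lEst f' a b * (2 - γ * cEst f' a b)) * ‖a - b‖ ^ 2 := by
  rw [norm_sub_sq_real, norm_smul, mul_pow, Real.norm_eq_abs, sq_abs, real_inner_smul_right,
    real_inner_comm, ← lEst_mul_norm_sq, norm_sub_sq_eq_lEst_mul_cEst hconv hgrad]
  ring

variable {g : En n → EReal}

theorem ESubgrad.ne_top {v x : En n} (h : ESubgrad g v x) (hg : ∃ w, g w ≠ ⊤) : g x ≠ ⊤ := by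
  obtain ⟨w, hw⟩ := hg
  intro htop
  have := h w
  rw [htop, EReal.top_add_of_ne_bot (EReal.coe_ne_bot _), top_le_iff] at this
  exact hw this

variable {γ : ℝ} {u p : En n}

theorem IsProx.ne_top (hp : IsProx γ g u p) (hg : ∃ w, g w ≠ ⊤) : g p ≠ ⊤ := by
  obtain ⟨w, hw⟩ := hg
  intro htop
  have := hp w
  rw [htop, EReal.top_add_of_ne_bot (EReal.coe_ne_bot _), top_le_iff] at this
  exact EReal.add_ne_top hw (EReal.coe_ne_top _) this

theorem IsProx.mul_sub_le_inner (hp : IsProx γ g u p) (hγ : 0 < γ) (hg : ProperLscConvex g)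
    {w : En n} (hw : g w ≠ ⊤) : γ * ((g p).toReal - (g w).toReal) ≤ ⟪p - u, w - p⟫ := by
  obtain ⟨hbot, hfin, -, hconv⟩ := hg
  set gp := (g p).toReal
  set gw := (g w).toReal
  have hgp : g p = gp := (EReal.coe_toReal (hp.ne_top hfin) (hbot p)).symm
  have hgw : g w = gw := (EReal.coe_toReal hw (hbot w)).symm
  -- test the minimality of `p` against `(1 - t) • p + t • w`, then let `t → 0⁺`
  refine le_of_forall_pos_le_add_mul (c := ‖w - p‖ ^ 2 / 2) fun t ht0 ht1 => ?_
  have hseg := hconv p w (1 - t) t (by linarith) ht0.le (by ring)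
  have hmin := hp ((1 - t) • p + t • w)
  rw [hgp, hgw] at hseg
  rw [hgp] at hmin
  have hreal : gp + ‖p - u‖ ^ 2 / (2 * γ)
      ≤ (1 - t) * gp + t * gw + ‖(1 - t) • p + t • w - u‖ ^ 2 / (2 * γ) := by
    have := hmin.trans (add_le_add hseg le_rfl)
    exact_mod_cast this
  have hnorm : ‖(1 - t) • p + t • w - u‖ ^ 2
      = ‖p - u‖ ^ 2 + 2 * t * ⟪p - u, w - p⟫ + t ^ 2 * ‖w - p‖ ^ 2 := by
    rw [show (1 - t) • p + t • w - u = (p - u) + t • (w - p) by module, norm_add_sq_real,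
      real_inner_smul_right, norm_smul, mul_pow, Real.norm_eq_abs, sq_abs]
    ring
  have hdiff : (1 - t) * gp + t * gw + ‖(1 - t) • p + t • w - u‖ ^ 2 / (2 * γ)
      - (gp + ‖p - u‖ ^ 2 / (2 * γ))
      = t / γ * (⟪p - u, w - p⟫ + t * (‖w - p‖ ^ 2 / 2) - γ * (gp - gw)) := by
    rw [hnorm]
    field_simp
    ring
  have := sub_nonneg.2 hreal
  rw [hdiff, mul_nonneg_iff_of_pos_left (by positivity)] at this
  linarith

theorem IsProx.sub_le_inner_div_sub_inner {q v : En n} (hp : IsProx γ g (q + γ • v) p)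
    (hγ : 0 < γ) (hg : ProperLscConvex g) {w : En n} (hw : g w ≠ ⊤) :
    (g p).toReal - (g w).toReal ≤ ⟪p - q, w - p⟫ / γ - ⟪v, w - p⟫ := by
  have h := hp.mul_sub_le_inner hγ hg hw
  rw [sub_add_eq_sub_sub, inner_sub_left, real_inner_smul_left] at h
  rw [le_sub_iff_add_le, le_div_iff₀ hγ]
  linarith

end Euclidean

section PrimalDual

variable {n m : ℕ} {f : En n → ℝ} {g : En n → EReal} {hs : En m → EReal} {A : En n →L[ℝ] En m}
  {xs : En n} {ys : En m}

theorem Pw_eq_coe_PpdR (hbot : ∀ x, g x ≠ ⊥) {z : En n} (hz : g z ≠ ⊤) (hxs : g xs ≠ ⊤) :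
    Pw f g A xs ys z = PpdR f g A xs ys z := by
  rw [Pw, PpdR, ← EReal.coe_toReal hz (hbot z), ← EReal.coe_toReal hxs (hbot xs)]
  norm_cast

theorem Pw_eq_top (hbot : ∀ x, g x ≠ ⊥) {z : En n} (hz : g z = ⊤) (hxs : g xs ≠ ⊤) :
    Pw f g A xs ys z = ⊤ := by
  rw [Pw, hz, ← EReal.coe_toReal hxs (hbot xs), EReal.coe_add_top, ← EReal.coe_add,
    EReal.top_sub_coe, EReal.top_add_of_ne_bot (EReal.coe_ne_bot _)]

theorem Qw_eq_coe_QpdR (hbot : ∀ y, hs y ≠ ⊥) {u : En m} (hu : hs u ≠ ⊤) (hys : hs ys ≠ ⊤) :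
    Qw hs A xs ys u = QpdR hs A xs ys u := by
  rw [Qw, QpdR, ← EReal.coe_toReal hu (hbot u), ← EReal.coe_toReal hys (hbot ys)]
  norm_cast

end PrimalDual

theorem EReal.zero_le_coe_add_coe_mul_top_sub {r a b c : ℝ} (ha : 0 < a) :
    (0 : EReal) ≤ r + a * ⊤ - b - c := by
  rw [EReal.coe_mul_top_of_pos ha, EReal.coe_add_top, EReal.top_sub_coe, EReal.top_sub_coe]
  exact le_top

theorem PD_fundamental_inequality_real {n m : ℕ} {f : En n → ℝ} {f' : En n → En n}
    {g : En n → EReal} {hs : En m → EReal} {A : En n →L[ℝ] En m}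
    (hconv : ConvexOn ℝ Set.univ f) (hgrad : ∀ z, HasGradientAt f (f' z) z)
    (hg : ProperLscConvex g) (hhs : ProperLscConvex hs) {γ γ' σ : ℝ} (hγ : 0 < γ) (hγ' : 0 < γ')
    (hσ : 0 < σ) {x₀ x₁ x₂ xs : En n} {y₁ y₂ ys : En m}
    (hx₁ : IsProx γ g (x₀ - γ • f' x₀ - γ • (A†) y₁) x₁)
    (hy₂ : IsProx σ hs (y₁ + σ • ((1 + γ' / γ) • A x₁ - (γ' / γ) • A x₀)) y₂)
    (hx₂ : IsProx γ' g (x₁ - γ' • f' x₁ - γ' • (A†) y₂) x₂)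
    (hsol : IsPDSol f' g hs A xs ys) (hgx₀ : g x₀ ≠ ⊤)
    {ε τ μ η : ℝ} (hε : 0 < ε) (hτ : 0 < τ) (hμ : 0 < μ) (hη : 0 ≤ η)
    (hAη : ‖(A†) (y₂ - y₁)‖ ≤ η * ‖y₂ - y₁‖) :
    0 ≤ 1/2 * ‖x₁ - xs‖ ^ 2 - 1/2 * ‖x₂ - xs‖ ^ 2
        + (ε * (γ' / γ) + μ * η * γ' - 1) / 2 * ‖x₁ - x₂‖ ^ 2
        + (γ' / γ)
          * ((1 - γ * lEst f' x₀ x₁ * (2 - γ * cEst f' x₀ x₁)) / (2 * ε)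
             + τ * η * γ' / 2 - (γ' / γ) * (1 - γ * lEst f' x₀ x₁))
          * ‖x₀ - x₁‖ ^ 2
        + γ' / (2 * σ) * ‖y₁ - ys‖ ^ 2
        - (γ' / (2 * σ) - η * γ' / 2 * (1 / μ + (γ' / γ) / τ)) * ‖y₂ - y₁‖ ^ 2
        - γ' / (2 * σ) * ‖y₂ - ys‖ ^ 2
      + γ' * (γ' / γ) * PpdR f g A xs ys x₀
      - γ' * (1 + γ' / γ) * PpdR f g A xs ys x₁
      - γ' * QpdR hs A xs ys y₂ := by
  -- with `γ' = ρ γ` the final identity is polynomial in `ρ`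
  obtain ⟨ρ, hρ, rfl⟩ : ∃ ρ, 0 < ρ ∧ γ' = ρ * γ := ⟨γ' / γ, div_pos hγ' hγ, by field_simp⟩
  rw [mul_div_cancel_right₀ ρ hγ.ne'] at hy₂ ⊢
  have hx₂_xs := hx₂.mul_sub_le_inner hγ' hg (hsol.2.ne_top hg.2.1)
  have hx₁_x₂ := hx₁.mul_sub_le_inner hγ hg (hx₂.ne_top hg.2.1)
  have hx₁_x₀ := hx₁.mul_sub_le_inner hγ hg hgx₀
  have hy₂_ys := hy₂.sub_le_inner_div_sub_inner hσ hhs (hsol.1.ne_top hhs.2.1)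
  have hf_xs := hconv.add_inner_le_of_hasGradientAt (hgrad x₁) xs
  have hf_x₀ := hconv.add_inner_le_of_hasGradientAt (hgrad x₁) x₀
  have hA_x₂ := inner_apply_le_of_norm_adjoint_le hη hAη hμ (x₁ - x₂)
  have hA_x₀ := inner_apply_le_of_norm_adjoint_le hη hAη hτ (x₁ - x₀)
  have hyoung := real_inner_le_young hε (x₁ - x₂) ((x₀ - x₁) - γ • (f' x₀ - f' x₁))
  rw [norm_sub_smul_sub_sq hconv hgrad] at hyoung
  have hlEst := lEst_mul_norm_sq f' x₀ x₁
  simp only [PpdR, QpdR, map_sub, inner_sub_left, inner_sub_right, real_inner_smul_left,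
    real_inner_smul_right, ContinuousLinearMap.adjoint_inner_left,
    ContinuousLinearMap.adjoint_inner_right, norm_sub_sq_real, real_inner_self_eq_norm_sq,
    real_inner_comm (A _), real_inner_comm (f' _), real_inner_comm x₀ x₁, real_inner_comm x₀ x₂,
    real_inner_comm x₁ x₂, real_inner_comm y₁ y₂]
    at hx₂_xs hx₁_x₂ hx₁_x₀ hy₂_ys hf_xs hf_x₀ hA_x₂ hA_x₀ hyoung hlEst ⊢
  linear_combination hx₂_xs + ρ * hx₁_x₂ + ρ ^ 2 * hx₁_x₀ + ρ * γ * hy₂_ys + ρ * γ * hf_xs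
    + ρ ^ 2 * γ * hf_x₀ + ρ * γ * hA_x₂ + ρ ^ 2 * γ * hA_x₀ + ρ * hyoung - ρ ^ 2 * γ * hlEst

/-- Indexing is shifted by one: Lean `x (k+1)`, `y (k+1)`, `γ (k+1)`, `σ (k+1)` are the paper's
`x^k`, `y^k`, `γ_k`, `σ_k` (so `x 0 = x^{-1}`, `x 1 = x⁰`, `y 1 = y⁰`). -/
theorem PD_fundamental_inequality_general {n m : ℕ}
    (f : En n → ℝ) (f' : En n → En n) (g : En n → EReal) (hs : En m → EReal)
    (A : En n →L[ℝ] En m)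
    (hconv : ConvexOn ℝ Set.univ f)
    (hgrad : ∀ z, HasGradientAt f (f' z) z)
    (hg : ProperLscConvex g) (hhs : ProperLscConvex hs)
    (γ σ : ℕ → ℝ) (hγpos : ∀ k, 0 < γ k) (hσpos : ∀ k, 0 < σ k)
    (x : ℕ → En n) (y : ℕ → En m)
    (hyup : ∀ k : ℕ, IsProx (σ (k+2)) hs
      (y (k+1) + σ (k+2) • ((1 + γ (k+2) / γ (k+1)) • A (x (k+1))
        - (γ (k+2) / γ (k+1)) • A (x k))) (y (k+2)))
    (hxup : ∀ k : ℕ, IsProx (γ (k+2)) g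
      (x (k+1) - γ (k+2) • f' (x (k+1))
        - γ (k+2) • ContinuousLinearMap.adjoint A (y (k+2))) (x (k+2)))
    (xs : En n) (ys : En m) (hsol : IsPDSol f' g hs A xs ys)
    (k : ℕ) (hk : 1 ≤ k)
    (ε τ μ η : ℝ) (hε : 0 < ε) (hτ : 0 < τ) (hμ : 0 < μ)
    (hη : ‖ContinuousLinearMap.adjoint A (y (k+2) - y (k+1))‖ / ‖y (k+2) - y (k+1)‖ ≤ η) :
    (0 : EReal) ≤
      ((1/2 * ‖x (k+1) - xs‖ ^ 2 - 1/2 * ‖x (k+2) - xs‖ ^ 2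
        + (ε * (γ (k+2) / γ (k+1)) + μ * η * γ (k+2) - 1) / 2 * ‖x (k+1) - x (k+2)‖ ^ 2
        + (γ (k+2) / γ (k+1))
          * ((1 - γ (k+1) * lEst f' (x k) (x (k+1))
                * (2 - γ (k+1) * cEst f' (x k) (x (k+1)))) / (2 * ε)
             + τ * η * γ (k+2) / 2
             - (γ (k+2) / γ (k+1)) * (1 - γ (k+1) * lEst f' (x k) (x (k+1))))
          * ‖x k - x (k+1)‖ ^ 2
        + γ (k+2) / (2 * σ (k+2)) * ‖y (k+1) - ys‖ ^ 2
        - (γ (k+2) / (2 * σ (k+2)) - η * γ (k+2) / 2 * (1 / μ + (γ (k+2) / γ (k+1)) / τ))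
            * ‖y (k+2) - y (k+1)‖ ^ 2
        - γ (k+2) / (2 * σ (k+2)) * ‖y (k+2) - ys‖ ^ 2 : ℝ) : EReal)
      + ((γ (k+2) * (γ (k+2) / γ (k+1)) : ℝ) : EReal) * Pw f g A xs ys (x k)
      - ((γ (k+2) * (1 + γ (k+2) / γ (k+1)) : ℝ) : EReal) * Pw f g A xs ys (x (k+1))
      - ((γ (k+2) : ℝ) : EReal) * Qw hs A xs ys (y (k+2)) := by
  obtain ⟨j, rfl⟩ : ∃ j, k = j + 1 := ⟨k - 1, by omega⟩
  have hx₁ := hxup j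
  have hx₂ := hxup (j + 1)
  have hy₂ := hyup (j + 1)
  have hgxs := hsol.2.ne_top hg.2.1
  rw [Pw_eq_coe_PpdR hg.1 (hx₁.ne_top hg.2.1) hgxs,
    Qw_eq_coe_QpdR hhs.1 (hy₂.ne_top hhs.2.1) (hsol.1.ne_top hhs.2.1)]
  by_cases hgx₀ : g (x (j + 1)) = ⊤
  · rw [Pw_eq_top hg.1 hgx₀ hgxs, ← EReal.coe_mul, ← EReal.coe_mul]
    exact EReal.zero_le_coe_add_coe_mul_top_sub (mul_pos (hγpos _) (div_pos (hγpos _) (hγpos _)))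
  · rw [Pw_eq_coe_PpdR hg.1 hgx₀ hgxs]
    exact_mod_cast PD_fundamental_inequality_real hconv hgrad hg hhs (hγpos _) (hγpos _) (hσpos _)
      hx₁ hy₂ hx₂ hsol hgx₀ hε hτ hμ ((div_nonneg (norm_nonneg _) (norm_nonneg _)).trans hη)
      ((A†).norm_apply_le_of_norm_div_le hη)

/-- fundamental inequality for the primal-dual iterations
(Lemma "thm:PD:descent"). Indexing is shifted by one: Lean `x (k+1)`, `y (k+1)`,
`γ (k+1)`, `σ (k+1)` are the paper `x^k`, `y^k`, `γ_k`, `σ_k` (so `x 0 = x^{-1}`,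
`x 1 = x⁰`, `y 1 = y⁰`). -/
theorem PD_fundamental_inequality {n m : ℕ}
    (f : En n → ℝ) (f' : En n → En n) (g : En n → EReal) (hs : En m → EReal)
    (A : En n →L[ℝ] En m)
    (hconv : ConvexOn ℝ Set.univ f)
    (hgrad : ∀ z, HasGradientAt f (f' z) z)
    (hlip : LocallyLipschitz f')
    (hg : ProperLscConvex g) (hhs : ProperLscConvex hs)
    (γ σ : ℕ → ℝ) (hγpos : ∀ k, 0 < γ k) (hσpos : ∀ k, 0 < σ k)
    (x : ℕ → En n) (y : ℕ → En m)
    (hyup : ∀ k : ℕ, IsProx (σ (k+2)) hs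
      (y (k+1) + σ (k+2) • ((1 + γ (k+2) / γ (k+1)) • A (x (k+1))
        - (γ (k+2) / γ (k+1)) • A (x k))) (y (k+2)))
    (hxup : ∀ k : ℕ, IsProx (γ (k+2)) g
      (x (k+1) - γ (k+2) • f' (x (k+1))
        - γ (k+2) • ContinuousLinearMap.adjoint A (y (k+2))) (x (k+2)))
    (xs : En n) (ys : En m) (hsol : IsPDSol f' g hs A xs ys)
    (k : ℕ) (hk : 1 ≤ k)
    (ε τ μ η : ℝ) (hε : 0 < ε) (hτ : 0 < τ) (hμ : 0 < μ)
    (hη : ‖ContinuousLinearMap.adjoint A (y (k+2) - y (k+1))‖ / ‖y (k+2) - y (k+1)‖ ≤ η) :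
    (0 : EReal) ≤
      ((1/2 * ‖x (k+1) - xs‖ ^ 2 - 1/2 * ‖x (k+2) - xs‖ ^ 2
        + (ε * (γ (k+2) / γ (k+1)) + μ * η * γ (k+2) - 1) / 2 * ‖x (k+1) - x (k+2)‖ ^ 2
        + (γ (k+2) / γ (k+1))
          * ((1 - γ (k+1) * lEst f' (x k) (x (k+1))
                * (2 - γ (k+1) * cEst f' (x k) (x (k+1)))) / (2 * ε)
             + τ * η * γ (k+2) / 2
             - (γ (k+2) / γ (k+1)) * (1 - γ (k+1) * lEst f' (x k) (x (k+1))))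
          * ‖x k - x (k+1)‖ ^ 2
        + γ (k+2) / (2 * σ (k+2)) * ‖y (k+1) - ys‖ ^ 2
        - (γ (k+2) / (2 * σ (k+2)) - η * γ (k+2) / 2 * (1 / μ + (γ (k+2) / γ (k+1)) / τ))
            * ‖y (k+2) - y (k+1)‖ ^ 2
        - γ (k+2) / (2 * σ (k+2)) * ‖y (k+2) - ys‖ ^ 2 : ℝ) : EReal)
      + ((γ (k+2) * (γ (k+2) / γ (k+1)) : ℝ) : EReal) * Pw f g A xs ys (x k)
      - ((γ (k+2) * (1 + γ (k+2) / γ (k+1)) : ℝ) : EReal) * Pw f g A xs ys (x (k+1))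
      - ((γ (k+2) : ℝ) : EReal) * Qw hs A xs ys (y (k+2)) :=
  PD_fundamental_inequality_general f f' g hs A hconv hgrad hg hhs γ σ hγpos hσpos x y hyup hxup xs
    ys hsol k hk ε τ μ η hε hτ hμ hη
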